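/- Let A be a congruence class all of whose constrained terms carry the same constraint, lying in a set Π of classes for which M is Π-closed for some ground term α ∈ M, and assume gnd_M(E) ⊨ sσ ≈ tσ for all substitutions σ grounding for A and all {sσ, tσ} ⊆ Aσ. Then gnd_M(E) ⊨ sσ ≈ tσ for all substitutions σ grounding for norm(A) and all {sσ, tσ} ⊆ norm(A)σ. -/

import Mathlib

namespace NGCC

inductive Tm (F : Type) : Type
  | var : ℕ → Tm F
  | app : F → List (Tm F) → Tm F

instance {F : Type} : Inhabited (Tm F) := ⟨Tm.var 0⟩

namespace Tm
variable {F : Type}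

def subst (σ : ℕ → Tm F) : Tm F → Tm F
  | var x => σ x
  | app f ts => app f (ts.attach.map fun t => t.1.subst σ)
  decreasing_by simp only [app.sizeOf_spec]; have h := List.sizeOf_lt_of_mem t.2; omega

def varsList : Tm F → List ℕ
  | var x => [x]
  | app _ ts => (ts.attach.map fun t => t.1.varsList).flatten
  decreasing_by simp only [app.sizeOf_spec]; have h := List.sizeOf_lt_of_mem t.2; omega

def varsIn (t : Tm F) : Set ℕ := {x | x ∈ t.varsList}

def Ground (t : Tm F) : Prop := t.varsList = []

def size : Tm F → ℕ
  | var _ => 1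
  | app _ ts => 1 + (ts.attach.map fun t => t.1.size).sum
  decreasing_by simp only [app.sizeOf_spec]; have h := List.sizeOf_lt_of_mem t.2; omega

def count (x : ℕ) : Tm F → ℕ
  | var y => if y = x then 1 else 0
  | app _ ts => (ts.attach.map fun t => count x t.1).sum
  decreasing_by simp only [app.sizeOf_spec]; have h := List.sizeOf_lt_of_mem t.2; omega

def eval {α : Type} (I : F → List α → α) (v : ℕ → α) : Tm F → α
  | var x => v x
  | app f ts => I f (ts.attach.map fun t => t.1.eval I v)
  decreasing_by simp only [app.sizeOf_spec]; have h := List.sizeOf_lt_of_mem t.2; omega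

end Tm


abbrev Subst (F : Type) := ℕ → Tm F

def Subst.dom {F : Type} (σ : Subst F) : Set ℕ := {x | σ x ≠ Tm.var x}

def Subst.comp {F : Type} (σ δ : Subst F) : Subst F := fun x => (σ x).subst δ

structure CTerm (F : Type) where
  constr : Set (Tm F)
  term : Tm F

abbrev CClass (F : Type) := Set (CTerm F)

variable {F : Type}

/-- Application of a substitution to a constraint (set of atoms `u ∈ M`). -/
def substConstr (Γ : Set (Tm F)) (σ : Subst F) : Set (Tm F) := (fun u => u.subst σ) '' Γ

def CTerm.subst (ct : CTerm F) (σ : Subst F) : CTerm F :=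
  ⟨substConstr ct.constr σ, ct.term.subst σ⟩

def substClass (A : CClass F) (σ : Subst F) : CClass F := (fun ct => ct.subst σ) '' A

/-- `Γσ` is true: every atom of `Γσ` belongs to `M`. -/
def ConstrHolds (M : Set (Tm F)) (Γ : Set (Tm F)) (σ : Subst F) : Prop :=
  substConstr Γ σ ⊆ M

/-- Satisfiability of a constraint with respect to `M`. -/
def ConstrSat (M : Set (Tm F)) (Γ : Set (Tm F)) : Prop :=
  ∃ σ : Subst F, ConstrHolds M Γ σ

/-- `σ` is grounding for the class `A` (for all its constrained terms). -/
def GroundingForClass (σ : Subst F) (A : CClass F) : Prop :=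
  ∀ ct ∈ A, (ct.term.subst σ).Ground ∧ ∀ u ∈ ct.constr, (u.subst σ).Ground

/-- Separating variables of a class. -/
def sepVars (A : CClass F) : Set ℕ := ⋂ ct ∈ A, (CTerm.term ct).varsIn

/-- All variables of the terms of a class. -/
def termVars (A : CClass F) : Set ℕ := ⋃ ct ∈ A, (CTerm.term ct).varsIn

/-- Free variables of a class. -/
def freeVars (A : CClass F) : Set ℕ := termVars A \ sepVars A

/-- All variables occurring in a class (terms and constraints). -/
def varsAll (A : CClass F) : Set ℕ :=
  ⋃ ct ∈ A, ((CTerm.term ct).varsIn ∪ ⋃ u ∈ CTerm.constr ct, u.varsIn)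

/-- `gnd'(A)`. -/
def gnd' (M : Set (Tm F)) (A : CClass F) : Set (CClass F) :=
  { B | ∃ σ : Subst F, Subst.dom σ = sepVars A ∧ (∀ x ∈ Subst.dom σ, (σ x).Ground) ∧
      B = { ct' | ∃ ct ∈ A, ConstrSat M (substConstr (CTerm.constr ct) σ) ∧ ct' = ct.subst σ } }

/-- `gnd(A)`: sets of ground terms. -/
def gnd (M : Set (Tm F)) (A : CClass F) : Set (Set (Tm F)) :=
  { S | ∃ B ∈ gnd' M A,
      S = { t | ∃ σ : Subst F, GroundingForClass σ B ∧
              ∃ ct ∈ B, ConstrHolds M (CTerm.constr ct) σ ∧ t = (CTerm.term ct).subst σ } }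

/-- The elements of `gnd(A)` regarded as classes of constrained ground terms. -/
def gndCl (M : Set (Tm F)) (A : CClass F) : Set (CClass F) :=
  { S | ∃ B ∈ gnd' M A,
      S = { ct' | ∃ σ : Subst F, GroundingForClass σ B ∧
              ∃ ct ∈ B, ConstrHolds M (CTerm.constr ct) σ ∧ ct' = ct.subst σ } }

/-- `B` subsumes `A`. -/
def Subsumes (M : Set (Tm F)) (B A : CClass F) : Prop :=
  ∀ A' ∈ gnd M A, ∃ B' ∈ gnd M B, A' ⊆ B'

/-- `A` is `M`-constrained: the atom `sᵢ ∈ M` occurs in `Γᵢ` for each `Γᵢ ∥ sᵢ ∈ A`. -/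
def MConstrained (A : CClass F) : Prop := ∀ ct ∈ A, CTerm.term ct ∈ CTerm.constr ct

/-- `ρ` is a renaming of the free variables of `A` to fresh variables. -/
def IsNormRenaming (A : CClass F) (ρ : Subst F) : Prop :=
  (∀ x, ∃ y, ρ x = Tm.var y) ∧ (∀ x, x ∉ freeVars A → ρ x = Tm.var x) ∧
  (∀ x ∈ freeVars A, ∀ x' ∈ freeVars A, ρ x = ρ x' → x = x') ∧
  (∀ x ∈ freeVars A, ∀ y, ρ x = Tm.var y → y ∉ varsAll A)

/-- The normal class `norm(A)` for the renaming `ρ`. -/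
def normC (A : CClass F) (ρ : Subst F) : CClass F :=
  { ct' | ∃ ct ∈ A, ct' = ⟨CTerm.constr ct ∪ substConstr (CTerm.constr ct) ρ, CTerm.term ct⟩ } ∪
  { ct' | ∃ ct ∈ A, ((CTerm.term ct).varsIn ∩ freeVars A).Nonempty ∧
      ct' = ⟨CTerm.constr ct ∪ substConstr (CTerm.constr ct) ρ, (CTerm.term ct).subst ρ⟩ }

/-- `Aμ` for a grounding substitution `μ`: the set of ground terms
`{sμ | Γ ∥ s ∈ A and Γμ true}`. -/
def applyClass (M : Set (Tm F)) (A : CClass F) (μ : Subst F) : Set (Tm F) :=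
  { t | ∃ ct ∈ A, ConstrHolds M (CTerm.constr ct) μ ∧ t = (CTerm.term ct).subst μ }

/-- Subterm relation. -/
inductive Subterm {F : Type} : Tm F → Tm F → Prop
  | refl (t : Tm F) : Subterm t t
  | app {s t : Tm F} (f : F) (ts : List (Tm F)) : t ∈ ts → Subterm s t → Subterm s (Tm.app f ts)

/-- `s` occurs as a (sub)term in `Π`. -/
def OccursIn (s : Tm F) (P : Set (CClass F)) : Prop :=
  ∃ A ∈ P, ∃ ct ∈ A, Subterm s (CTerm.term ct) ∨ ∃ u ∈ CTerm.constr ct, Subterm s u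

/-- `M` is `Π`-closed for the ground term `t`. -/
def PiClosed (M : Set (Tm F)) (P : Set (CClass F)) (t : Tm F) : Prop :=
  ∀ s, OccursIn s P → ∀ σ : Subst F, s.subst σ ∈ M →
    ∀ δ : Subst F, (∀ x, σ x ≠ δ x → δ x = t) → s.subst δ ∈ M

/-- Semantic equational consequence: every model of the (implicitly universally
quantified) equations is a model of `s ≈ t`. -/
def Entails (Eqs : Set (Tm F × Tm F)) (s t : Tm F) : Prop :=
  ∀ (α : Type) (_ : Nonempty α) (I : F → List α → α) (v : ℕ → α),
    (∀ e ∈ Eqs, ∀ w : ℕ → α, Tm.eval I w e.1 = Tm.eval I w e.2) →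
    Tm.eval I v s = Tm.eval I v t

/-- `gnd_M(E)`: ground instances of equations of `E` with all ground terms in `M`. -/
def gndM (M : Set (Tm F)) (E : Set (Tm F × Tm F)) : Set (Tm F × Tm F) :=
  { e | ∃ p ∈ E, ∃ σ : Subst F,
      e = (Tm.subst σ p.1, Tm.subst σ p.2) ∧ Tm.subst σ p.1 ∈ M ∧ Tm.subst σ p.2 ∈ M }

def IsUnifier (μ : Subst F) (s t : Tm F) : Prop := s.subst μ = t.subst μ

def IsMGU (μ : Subst F) (s t : Tm F) : Prop :=
  IsUnifier μ s t ∧ ∀ τ : Subst F, IsUnifier τ s t → ∃ δ : Subst F, τ = Subst.comp μ δ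

/-- Simultaneous most general unifier of the equations `s₁ = t₁` and `s₂ = t₂`. -/
def IsSimMGU (μ : Subst F) (s₁ t₁ s₂ t₂ : Tm F) : Prop :=
  IsUnifier μ s₁ t₁ ∧ IsUnifier μ s₂ t₂ ∧
  ∀ τ : Subst F, IsUnifier τ s₁ t₁ → IsUnifier τ s₂ t₂ → ∃ δ : Subst F, τ = Subst.comp μ δ

/-- Conjoin a constraint to every constrained term of a class. -/
def addConstr (A : CClass F) (Γ : Set (Tm F)) : CClass F :=
  { ct' | ∃ ct ∈ A, ct' = ⟨CTerm.constr ct ∪ Γ, CTerm.term ct⟩ }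

/-- The rules of the calculus CC(X). -/
inductive Step {F : Type} (M : Set (Tm F)) : Set (CClass F) → Set (CClass F) → Prop
  | merge (P : Set (CClass F)) (A B C' : CClass F) (ρA ρB μ : Subst F) (ct₁ ct₂ : CTerm F)
      (hA : A ∈ P) (hB : B ∈ P)
      (hρA : IsNormRenaming A ρA) (hρB : IsNormRenaming B ρB)
      (h1 : ct₁ ∈ A) (h2 : ct₂ ∈ B)
      (hmgu : IsMGU μ ct₁.term ct₂.term)
      (hC' : C' = substClass (addConstr (normC A ρA) (ct₁.constr ∪ ct₂.constr) ∪
                               addConstr (normC B ρB) (ct₁.constr ∪ ct₂.constr)) μ)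
      (hnsub : ∀ C ∈ P, ¬ Subsumes M C C') :
      Step M P (insert C' P)
  | deduction (P : Set (CClass F)) (A B C' : CClass F) (f : F)
      (ss ts ss' ts' : List (Tm F)) (Γ Δ : Set (Tm F)) (Γs Δs : List (Set (Tm F))) (μ : Subst F)
      (hA : A ∈ P) (hB : B ∈ P)
      (h1 : (⟨Γ, Tm.app f ss⟩ : CTerm F) ∈ A)
      (h2 : (⟨Δ, Tm.app f ts⟩ : CTerm F) ∈ B)
      (hl1 : ss'.length = ss.length) (hl2 : ts'.length = ss.length)
      (hl3 : ts.length = ss.length) (hl4 : Γs.length = ss.length) (hl5 : Δs.length = ss.length)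
      (hside : ∀ i < ss.length, ∃ D ∈ P, ∃ ρ : Subst F, IsNormRenaming D ρ ∧
          (⟨Γs[i]!, ss'[i]!⟩ : CTerm F) ∈ normC D ρ ∧ (⟨Δs[i]!, ts'[i]!⟩ : CTerm F) ∈ normC D ρ)
      (hmgu : IsSimMGU μ (Tm.app f ss') (Tm.app f ss) (Tm.app f ts') (Tm.app f ts))
      (hC' : C' = substClass
          ({⟨Γ ∪ Δ ∪ ⋃₀ {G | G ∈ Γs} ∪ ⋃₀ {G | G ∈ Δs}, Tm.app f ss'⟩,
            ⟨Γ ∪ Δ ∪ ⋃₀ {G | G ∈ Γs} ∪ ⋃₀ {G | G ∈ Δs}, Tm.app f ts'⟩} : CClass F) μ)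
      (hnsub : ∀ C ∈ P, ¬ Subsumes M C C') :
      Step M P (insert C' P)
  | subsump (P : Set (CClass F)) (A B : CClass F)
      (hA : A ∈ P) (hB : B ∈ P) (hne : A ≠ B) (hsub : Subsumes M B A) :
      Step M P (P \ {A})

/-- The single-term class `{f(x₁,…,x_k) ∈ M ∥ f(x₁,…,x_k)}`. -/
def singleTermClass (ar : F → ℕ) (f : F) : CClass F :=
  {⟨{Tm.app f ((List.range (ar f)).map Tm.var)}, Tm.app f ((List.range (ar f)).map Tm.var)⟩}

/-- The initial state `Π₀` of CC(X) for the equations `E`. -/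
def initState (ar : F → ℕ) (E : Set (Tm F × Tm F)) : Set (CClass F) :=
  { A | ∃ p ∈ E, A = ({⟨{p.1, p.2}, p.1⟩, ⟨{p.1, p.2}, p.2⟩} : CClass F) } ∪
  { A | ∃ f : F, A = singleTermClass ar f }

/-- `B` subsumes `A` by matching. -/
def SubsumesByMatching (M : Set (Tm F)) (B A : CClass F) : Prop :=
  ∃ σ : Subst F, Subst.dom σ ⊆ sepVars B ∧ (∀ x ∈ sepVars B, (σ x).varsIn ⊆ varsAll A) ∧
    ∀ ct ∈ A, ∃ τ : Subst F, Subst.dom τ ⊆ freeVars B ∧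
      (∀ y ∈ freeVars B, (τ y).varsIn ⊆ varsAll A) ∧
      ∃ ct' ∈ B, CTerm.term ct = ((CTerm.term ct').subst σ).subst τ ∧
        ∀ δ : Subst F, ConstrHolds M (CTerm.constr ct) δ →
          ∃ δ' : Subst F,
            ConstrHolds M (substConstr (substConstr (substConstr (CTerm.constr ct') σ) τ) δ) δ'

/-- `M` determined by the symbol-count ordering and a bound `β`. -/
def Mle (β : Tm F) : Set (Tm F) := { t | t.Ground ∧ t.size ≤ β.size }

def varsFinset (t : Tm F) : Finset ℕ := t.varsList.toFinset

/-- Truth of the LIA abstraction `lic(t ⪯ β)` under an integer assignment `v`. -/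
def licHolds (t β : Tm F) (v : ℕ → ℕ) : Prop :=
  (∀ x ∈ varsFinset t, 1 ≤ v x) ∧
  (∑ x ∈ varsFinset t, (t.count x : ℤ) * (v x : ℤ)) ≤
    (β.size : ℤ) - ((t.size : ℤ) - ∑ x ∈ varsFinset t, (t.count x : ℤ))

/-!
Sending a free variable `x` of `A` to `α` keeps the common constraint true, by Π-closedness, and
does not change the instance of a term of `A` avoiding `x`, which exists since `x` is not
separating. So every instance `sτ` is entailed equal to the one with `x ↦ α`. After doing this for
the free variables of a term, the instances `sσ` and `sρσ` occurring in `norm(A)σ` become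
instances of `A` under one common substitution, because `σ` and `ρσ` differ only on free
variables of `A`.
-/

namespace Tm

theorem induction' {motive : Tm F → Prop} (var : ∀ x, motive (.var x))
    (app : ∀ f ts, (∀ t ∈ ts, motive t) → motive (.app f ts)) : ∀ t, motive t
  | .var x => var x
  | .app f ts => app f ts fun t _ => induction' var app t
  decreasing_by have := List.sizeOf_lt_of_mem ‹t ∈ ts›; simp only [Tm.app.sizeOf_spec]; omega

@[simp]
theorem subst_var (σ : Subst F) (x : ℕ) : (Tm.var x).subst σ = σ x := by
  rw [subst]

@[simp]
theorem subst_app (σ : Subst F) (f : F) (ts : List (Tm F)) :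
    (Tm.app f ts).subst σ = .app f (ts.map (subst σ)) := by
  rw [subst]; simp

@[simp]
theorem mem_varsIn_var {x y : ℕ} : y ∈ (Tm.var x : Tm F).varsIn ↔ y = x := by
  simp [varsIn, varsList]

@[simp]
theorem mem_varsIn_app {x : ℕ} {f : F} {ts : List (Tm F)} :
    x ∈ (Tm.app f ts).varsIn ↔ ∃ t ∈ ts, x ∈ t.varsIn := by
  simp [varsIn, varsList]

theorem subst_congr {σ δ : Subst F} {t : Tm F} (h : ∀ x ∈ t.varsIn, σ x = δ x) :
    t.subst σ = t.subst δ := by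
  induction t using induction' with
  | var x => simpa using h
  | app f ts ih =>
    simp only [subst_app, app.injEq, true_and]
    exact List.map_congr_left fun s hs => ih s hs fun x hx => h x (mem_varsIn_app.2 ⟨s, hs, hx⟩)

theorem subst_eq_self {σ : Subst F} {t : Tm F} (h : ∀ x ∈ t.varsIn, σ x = .var x) :
    t.subst σ = t := by
  induction t using induction' with
  | var x => simpa using h
  | app f ts ih =>
    simp only [subst_app, app.injEq, true_and]
    exact List.map_congr_left (f := subst σ) (g := id) (fun s hs =>
      ih s hs fun x hx => h x (mem_varsIn_app.2 ⟨s, hs, hx⟩)) |>.trans (List.map_id ts)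

theorem subst_subst (σ δ : Subst F) (t : Tm F) :
    (t.subst σ).subst δ = t.subst (σ.comp δ) := by
  induction t using induction' with
  | var x => simp [Subst.comp]
  | app f ts ih => simpa using List.map_congr_left ih

theorem mem_varsIn_subst {σ : Subst F} {t : Tm F} {x : ℕ} :
    x ∈ (t.subst σ).varsIn ↔ ∃ y ∈ t.varsIn, x ∈ (σ y).varsIn := by
  induction t using induction' with
  | var y => simp
  | app f ts ih =>
    simp only [subst_app, mem_varsIn_app, List.mem_map]
    constructor
    · rintro ⟨_, ⟨s, hs, rfl⟩, hx⟩
      obtain ⟨y, hy, hxy⟩ := (ih s hs).1 hx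
      exact ⟨y, ⟨s, hs, hy⟩, hxy⟩
    · rintro ⟨y, ⟨s, hs, hy⟩, hxy⟩
      exact ⟨_, ⟨s, hs, rfl⟩, (ih s hs).2 ⟨y, hy, hxy⟩⟩

theorem ground_iff {t : Tm F} : t.Ground ↔ ∀ x, x ∉ t.varsIn :=
  List.eq_nil_iff_forall_not_mem

theorem ground_subst {σ : Subst F} {t : Tm F} :
    (t.subst σ).Ground ↔ ∀ x ∈ t.varsIn, (σ x).Ground := by
  simp only [ground_iff, mem_varsIn_subst]
  grind

end Tm

theorem Tm.ground_subst_update {τ : Subst F} {t a : Tm F} (ht : (t.subst τ).Ground)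
    (ha : a.Ground) (x : ℕ) : (t.subst (Function.update τ x a)).Ground := by
  rw [Tm.ground_subst] at ht ⊢
  intro y hy
  by_cases hyx : y = x
  · simpa [hyx] using ha
  · simpa [hyx] using ht y hy

theorem entails_equivalence (Eqs : Set (Tm F × Tm F)) : Equivalence (Entails Eqs) where
  refl _ _ _ _ _ _ := rfl
  symm h β hβ I v hE := (h β hβ I v hE).symm
  trans h₁ h₂ β hβ I v hE := (h₁ β hβ I v hE).trans (h₂ β hβ I v hE)

theorem constrHolds_union {M Γ Δ : Set (Tm F)} {σ : Subst F} :
    ConstrHolds M (Γ ∪ Δ) σ ↔ ConstrHolds M Γ σ ∧ ConstrHolds M Δ σ := by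
  simp [ConstrHolds, substConstr, Set.image_union]

theorem constrHolds_substConstr {M Γ : Set (Tm F)} {ρ σ : Subst F} :
    ConstrHolds M (substConstr Γ ρ) σ ↔ ConstrHolds M Γ (ρ.comp σ) := by
  simp [ConstrHolds, substConstr, Set.image_image, Tm.subst_subst]

theorem occursIn_of_mem_constr {P : Set (CClass F)} {A : CClass F} (hA : A ∈ P)
    {ct : CTerm F} (hct : ct ∈ A) {u : Tm F} (hu : u ∈ ct.constr) : OccursIn u P :=
  ⟨A, hA, ct, hct, .inr ⟨u, hu, .refl u⟩⟩

theorem ConstrHolds.update {M Γ : Set (Tm F)} {P : Set (CClass F)} {α : Tm F}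
    (hcl : PiClosed M P α) (hocc : ∀ u ∈ Γ, OccursIn u P) {τ : Subst F}
    (h : ConstrHolds M Γ τ) (x : ℕ) : ConstrHolds M Γ (Function.update τ x α) := by
  rintro _ ⟨u, hu, rfl⟩
  refine hcl u (hocc u hu) τ (h ⟨u, hu, rfl⟩) _ fun y hy => ?_
  by_cases hyx : y = x
  · simp [hyx]
  · simp [hyx] at hy

theorem GroundingForClass.update {τ : Subst F} {A : CClass F} (h : GroundingForClass τ A)
    {a : Tm F} (ha : a.Ground) (x : ℕ) : GroundingForClass (Function.update τ x a) A :=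
  fun ct hct => ⟨Tm.ground_subst_update (h ct hct).1 ha x,
    fun u hu => Tm.ground_subst_update ((h ct hct).2 u hu) ha x⟩

def ClassRelated (M : Set (Tm F)) (r : Tm F → Tm F → Prop) (A : CClass F) : Prop :=
  ∀ σ : Subst F, GroundingForClass σ A →
    ∀ s ∈ applyClass M A σ, ∀ t ∈ applyClass M A σ, r s t

section CommonConstraint

variable {M : Set (Tm F)} {r : Tm F → Tm F → Prop} {P : Set (CClass F)} {α : Tm F}
  {A : CClass F} {Γ₀ : Set (Tm F)}

theorem mem_applyClass (hconstr : ∀ ct ∈ A, ct.constr = Γ₀) {τ : Subst F}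
    (hτ : ConstrHolds M Γ₀ τ) {ct : CTerm F} (hct : ct ∈ A) :
    ct.term.subst τ ∈ applyClass M A τ :=
  ⟨ct, hct, hconstr ct hct ▸ hτ, rfl⟩

theorem ClassRelated.rel_update (hmod : ClassRelated M r A) (hr : Equivalence r)
    (hconstr : ∀ ct ∈ A, ct.constr = Γ₀) {τ : Subst F} (hτ : GroundingForClass τ A)
    (hτc : ConstrHolds M Γ₀ τ) {x : ℕ} (hx : x ∈ freeVars A) {a : Tm F}
    (hτ' : GroundingForClass (Function.update τ x a) A)
    (hτ'c : ConstrHolds M Γ₀ (Function.update τ x a)) {ct : CTerm F} (hct : ct ∈ A) :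
    r (ct.term.subst τ) (ct.term.subst (Function.update τ x a)) := by
  obtain ⟨ct', hct', hx'⟩ : ∃ ct' ∈ A, x ∉ ct'.term.varsIn := by
    by_contra! h
    exact hx.2 (Set.mem_iInter₂.2 h)
  have hfix : ct'.term.subst τ = ct'.term.subst (Function.update τ x a) :=
    Tm.subst_congr fun y hy => (Function.update_of_ne (ne_of_mem_of_not_mem hy hx') a τ).symm
  refine hr.trans (hmod τ hτ _ (mem_applyClass hconstr hτc hct) _
    (mem_applyClass hconstr hτc hct')) ?_
  rw [hfix]
  exact hmod _ hτ' _ (mem_applyClass hconstr hτ'c hct') _ (mem_applyClass hconstr hτ'c hct)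

theorem ClassRelated.rel_piecewise (hmod : ClassRelated M r A) (hr : Equivalence r)
    (hconstr : ∀ ct ∈ A, ct.constr = Γ₀) (hcl : PiClosed M P α) (hA : A ∈ P)
    (hα : α.Ground) {S : Finset ℕ} (hS : ↑S ⊆ freeVars A) {τ : Subst F}
    (hτ : GroundingForClass τ A) (hτc : ConstrHolds M Γ₀ τ) :
    GroundingForClass (S.piecewise (fun _ => α) τ) A ∧
      ConstrHolds M Γ₀ (S.piecewise (fun _ => α) τ) ∧
      ∀ ct ∈ A, r (ct.term.subst τ) (ct.term.subst (S.piecewise (fun _ => α) τ)) := by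
  classical
  induction S using Finset.induction_on with
  | empty => simpa using ⟨hτ, hτc, fun ct _ => hr.refl _⟩
  | insert x S _ ih =>
    rw [Finset.coe_insert, Set.insert_subset_iff] at hS
    obtain ⟨hg, hc, hrel⟩ := ih hS.2
    obtain ⟨ct, hct, -⟩ := Set.mem_iUnion₂.1 hS.1.1
    have hocc : ∀ u ∈ Γ₀, OccursIn u P :=
      fun u hu => occursIn_of_mem_constr hA hct (hconstr ct hct ▸ hu)
    have hg' := hg.update hα x
    have hc' := hc.update hcl hocc x
    rw [Finset.piecewise_insert]
    exact ⟨hg', hc', fun ct hct =>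
      hr.trans (hrel ct hct) (hmod.rel_update hr hconstr hg hc hS.1 hg' hc' hct)⟩

theorem ClassRelated.rel_of_eqOn_freeVars_compl (hmod : ClassRelated M r A)
    (hr : Equivalence r) (hconstr : ∀ ct ∈ A, ct.constr = Γ₀) (hcl : PiClosed M P α)
    (hA : A ∈ P) (hα : α.Ground) {τ₁ τ₂ : Subst F}
    (hτ₁ : GroundingForClass τ₁ A) (hτ₁c : ConstrHolds M Γ₀ τ₁)
    (hτ₂ : GroundingForClass τ₂ A) (hτ₂c : ConstrHolds M Γ₀ τ₂)
    (heq : ∀ x ∉ freeVars A, τ₁ x = τ₂ x) {ct₁ ct₂ : CTerm F} (hct₁ : ct₁ ∈ A)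
    (hct₂ : ct₂ ∈ A) : r (ct₁.term.subst τ₁) (ct₂.term.subst τ₂) := by
  classical
  set S := ct₂.term.varsList.toFinset.filter (· ∈ freeVars A)
  have hS : ↑S ⊆ freeVars A := fun x hx => (Finset.mem_filter.1 hx).2
  obtain ⟨hθ₁, hθ₁c, hrel₁⟩ := hmod.rel_piecewise hr hconstr hcl hA hα hS hτ₁ hτ₁c
  obtain ⟨-, -, hrel₂⟩ := hmod.rel_piecewise hr hconstr hcl hA hα hS hτ₂ hτ₂c
  have hagree : ct₂.term.subst (S.piecewise (fun _ => α) τ₂) =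
      ct₂.term.subst (S.piecewise (fun _ => α) τ₁) := by
    refine Tm.subst_congr fun x hx => ?_
    by_cases hxf : x ∈ freeVars A
    · have hxS : x ∈ S := Finset.mem_filter.2 ⟨List.mem_toFinset.2 hx, hxf⟩
      simp [hxS]
    · have hxS : x ∉ S := fun h => hxf (hS h)
      simp [hxS, heq x hxf]
  have hmid := hmod _ hθ₁ _ (mem_applyClass hconstr hθ₁c hct₁) _
    (mem_applyClass hconstr hθ₁c hct₂)
  rw [← hagree] at hmid
  exact hr.trans (hr.trans (hrel₁ ct₁ hct₁) hmid) (hr.symm (hrel₂ ct₂ hct₂))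

end CommonConstraint

section Normalization

variable {M : Set (Tm F)} {A : CClass F} {Γ₀ : Set (Tm F)} {ρ σ : Subst F}

theorem mem_normC (hconstr : ∀ ct ∈ A, ct.constr = Γ₀) {ct₀ : CTerm F}
    (h : ct₀ ∈ normC A ρ) : ∃ ct ∈ A, ct₀.constr = Γ₀ ∪ substConstr Γ₀ ρ ∧
      (ct₀.term = ct.term ∨ ct₀.term = ct.term.subst ρ) := by
  rcases h with ⟨ct, hct, rfl⟩ | ⟨ct, hct, -, rfl⟩
  · exact ⟨ct, hct, by rw [hconstr ct hct], .inl rfl⟩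
  · exact ⟨ct, hct, by rw [hconstr ct hct], .inr rfl⟩

theorem GroundingForClass.of_normC (h : GroundingForClass σ (normC A ρ)) :
    GroundingForClass σ A := fun ct hct =>
  have h' := h _ (Set.mem_union_left _ ⟨ct, hct, rfl⟩)
  ⟨h'.1, fun u hu => h'.2 u (Set.mem_union_left _ hu)⟩

theorem GroundingForClass.comp_of_normC (hρ : ∀ x ∉ freeVars A, ρ x = .var x)
    (h : GroundingForClass σ (normC A ρ)) : GroundingForClass (ρ.comp σ) A := by
  intro ct hct
  have h' := h _ (Set.mem_union_left _ ⟨ct, hct, rfl⟩)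
  refine ⟨?_, fun u hu => ?_⟩
  · rw [← Tm.subst_subst]
    by_cases hfree : (ct.term.varsIn ∩ freeVars A).Nonempty
    · exact (h _ (Set.mem_union_right _ ⟨ct, hct, hfree, rfl⟩)).1
    · rw [Tm.subst_eq_self fun x hx => hρ x fun hxf => hfree ⟨x, hx, hxf⟩]
      exact h'.1
  · rw [← Tm.subst_subst]
    exact h'.2 _ (Set.mem_union_right _ ⟨u, hu, rfl⟩)

theorem exists_subst_of_mem_applyClass_normC (hconstr : ∀ ct ∈ A, ct.constr = Γ₀)
    (hρ : ∀ x ∉ freeVars A, ρ x = .var x) (hσ : GroundingForClass σ (normC A ρ)) {s : Tm F}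
    (hs : s ∈ applyClass M (normC A ρ) σ) :
    ∃ ct ∈ A, ∃ τ : Subst F, GroundingForClass τ A ∧ ConstrHolds M Γ₀ τ ∧
      (∀ x ∉ freeVars A, τ x = σ x) ∧ s = ct.term.subst τ := by
  obtain ⟨ct₀, hct₀, hc, rfl⟩ := hs
  obtain ⟨ct, hct, hconstr₀, hterm | hterm⟩ := mem_normC hconstr hct₀
  all_goals
    rw [hconstr₀, constrHolds_union, constrHolds_substConstr] at hc
    rw [hterm]
  · exact ⟨ct, hct, σ, hσ.of_normC, hc.1, fun _ _ => rfl, rfl⟩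
  · refine ⟨ct, hct, ρ.comp σ, hσ.comp_of_normC hρ, hc.2, fun x hx => ?_, Tm.subst_subst _ _ _⟩
    simp [Subst.comp, hρ x hx]

theorem ClassRelated.normC {r : Tm F → Tm F → Prop} {P : Set (CClass F)} {α : Tm F}
    (hmod : ClassRelated M r A) (hr : Equivalence r) (hconstr : ∀ ct ∈ A, ct.constr = Γ₀)
    (hcl : PiClosed M P α) (hA : A ∈ P) (hα : α.Ground)
    (hρ : ∀ x ∉ freeVars A, ρ x = .var x) : ClassRelated M r (normC A ρ) := by
  intro σ hσ s hs t ht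
  obtain ⟨ct₁, hct₁, τ₁, hτ₁, hτ₁c, heq₁, rfl⟩ :=
    exists_subst_of_mem_applyClass_normC hconstr hρ hσ hs
  obtain ⟨ct₂, hct₂, τ₂, hτ₂, hτ₂c, heq₂, rfl⟩ :=
    exists_subst_of_mem_applyClass_normC hconstr hρ hσ ht
  exact hmod.rel_of_eqOn_freeVars_compl hr hconstr hcl hA hα hτ₁ hτ₁c hτ₂ hτ₂c
    (fun x hx => (heq₁ x hx).trans (heq₂ x hx).symm) hct₁ hct₂

end Normalization

theorem entails_norm_of_entails_general {F : Type}
    (M : Set (Tm F)) (hMg : ∀ t ∈ M, t.Ground)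
    (E : Set (Tm F × Tm F))
    (P : Set (CClass F)) (α : Tm F) (hαM : α ∈ M) (hcl : PiClosed M P α)
    (A : CClass F) (hAP : A ∈ P)
    (Γ₀ : Set (Tm F)) (hconstr : ∀ ct ∈ A, CTerm.constr ct = Γ₀)
    (ρ : Subst F) (hρ : IsNormRenaming A ρ)
    (hmod : ∀ σ : Subst F, GroundingForClass σ A →
        ∀ s ∈ applyClass M A σ, ∀ t ∈ applyClass M A σ, Entails (gndM M E) s t) :
    ∀ σ : Subst F, GroundingForClass σ (normC A ρ) →
      ∀ s ∈ applyClass M (normC A ρ) σ, ∀ t ∈ applyClass M (normC A ρ) σ,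
        Entails (gndM M E) s t :=
  ClassRelated.normC hmod (entails_equivalence _) hconstr hcl hAP (hMg α hαM) hρ.2.1

/-- Corollary. If all ground instances of pairs from `A` are
entailed equal, the same holds for `norm(A)`. -/
theorem entails_norm_of_entails {F : Type} [Finite F] [Nonempty F]
    (M : Set (Tm F)) (hMfin : M.Finite) (hMg : ∀ t ∈ M, t.Ground)
    (E : Set (Tm F × Tm F)) (hEfin : E.Finite)
    (P : Set (CClass F)) (α : Tm F) (hαM : α ∈ M) (hcl : PiClosed M P α)
    (A : CClass F) (hAP : A ∈ P) (hAfin : A.Finite)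
    (Γ₀ : Set (Tm F)) (hconstr : ∀ ct ∈ A, CTerm.constr ct = Γ₀)
    (ρ : Subst F) (hρ : IsNormRenaming A ρ)
    (hmod : ∀ σ : Subst F, GroundingForClass σ A →
        ∀ s ∈ applyClass M A σ, ∀ t ∈ applyClass M A σ, Entails (gndM M E) s t) :
    ∀ σ : Subst F, GroundingForClass σ (normC A ρ) →
      ∀ s ∈ applyClass M (normC A ρ) σ, ∀ t ∈ applyClass M (normC A ρ) σ,
        Entails (gndM M E) s t :=
  entails_norm_of_entails_general M hMg E P α hαM hcl A hAP Γ₀ hconstr ρ hρ hmod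

end NGCC
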